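/- If ω₁, ω₂, ω₃, ω₄ are unit vectors in ℝ^d satisfying ω₁ + ω₂ + ω₃ + ω₄ = 0, then |ω₁ + ω₂|·|ω₃ + ω₄| + |ω₁ + ω₃|·|ω₂ + ω₄| + |ω₁ + ω₄|·|ω₂ + ω₃| = 4. -/

import Mathlib

/-! Each product pairs a vector with its negative, since `ω₃ + ω₄ = -(ω₁ + ω₂)` and so on, so the
left side is `‖ω₁ + ω₂‖² + ‖ω₁ + ω₃‖² + ‖ω₁ + ω₄‖² = 6 + 2 ⟪ω₁, ω₂ + ω₃ + ω₄⟫ = 6 + 2 ⟪ω₁, -ω₁⟫ = 4`. -/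

open RealInnerProductSpace

lemma norm_mul_norm_eq_sq_of_add_eq_zero {G : Type*} [SeminormedAddGroup G] {u v : G}
    (h : u + v = 0) : ‖u‖ * ‖v‖ = ‖u‖ ^ 2 := by
  rw [eq_neg_of_add_eq_zero_right h, norm_neg, sq]

section

variable {E : Type*} [SeminormedAddCommGroup E] [InnerProductSpace ℝ E]

lemma norm_add_sq_of_norm_eq_one {x y : E} (hx : ‖x‖ = 1) (hy : ‖y‖ = 1) :
    ‖x + y‖ ^ 2 = 2 + 2 * ⟪x, y⟫ := by
  rw [norm_add_sq_real, hx, hy]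
  ring

lemma inner_add_inner_add_inner_eq_neg_one {ω₁ ω₂ ω₃ ω₄ : E} (h₁ : ‖ω₁‖ = 1)
    (hsum : ω₁ + ω₂ + ω₃ + ω₄ = 0) : ⟪ω₁, ω₂⟫ + ⟪ω₁, ω₃⟫ + ⟪ω₁, ω₄⟫ = -1 := by
  have hrest : ω₂ + ω₃ + ω₄ = -ω₁ := by linear_combination (norm := abel) hsum
  have := congrArg (⟪ω₁, ·⟫) hrest
  simp only [inner_add_right, inner_neg_right, real_inner_self_eq_norm_sq, h₁] at this
  linarith

theorem norm_add_mul_norm_add_sum_eq_four {ω₁ ω₂ ω₃ ω₄ : E}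
    (h₁ : ‖ω₁‖ = 1) (h₂ : ‖ω₂‖ = 1) (h₃ : ‖ω₃‖ = 1) (h₄ : ‖ω₄‖ = 1)
    (hsum : ω₁ + ω₂ + ω₃ + ω₄ = 0) :
    ‖ω₁ + ω₂‖ * ‖ω₃ + ω₄‖ + ‖ω₁ + ω₃‖ * ‖ω₂ + ω₄‖ + ‖ω₁ + ω₄‖ * ‖ω₂ + ω₃‖ = 4 := by
  have h₁₂ : ω₁ + ω₂ + (ω₃ + ω₄) = 0 := by rw [← hsum]; abel
  have h₁₃ : ω₁ + ω₃ + (ω₂ + ω₄) = 0 := by rw [← hsum]; abel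
  have h₁₄ : ω₁ + ω₄ + (ω₂ + ω₃) = 0 := by rw [← hsum]; abel
  calc ‖ω₁ + ω₂‖ * ‖ω₃ + ω₄‖ + ‖ω₁ + ω₃‖ * ‖ω₂ + ω₄‖ + ‖ω₁ + ω₄‖ * ‖ω₂ + ω₃‖
      = ‖ω₁ + ω₂‖ ^ 2 + ‖ω₁ + ω₃‖ ^ 2 + ‖ω₁ + ω₄‖ ^ 2 := by
        rw [norm_mul_norm_eq_sq_of_add_eq_zero h₁₂, norm_mul_norm_eq_sq_of_add_eq_zero h₁₃,
          norm_mul_norm_eq_sq_of_add_eq_zero h₁₄]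
    _ = 6 + 2 * (⟪ω₁, ω₂⟫ + ⟪ω₁, ω₃⟫ + ⟪ω₁, ω₄⟫) := by
        rw [norm_add_sq_of_norm_eq_one h₁ h₂, norm_add_sq_of_norm_eq_one h₁ h₃,
          norm_add_sq_of_norm_eq_one h₁ h₄]
        ring
    _ = 4 := by
        rw [inner_add_inner_add_inner_eq_neg_one h₁ hsum]
        norm_num

end

theorem foschi_magical_identity {d : ℕ}
    (ω₁ ω₂ ω₃ ω₄ : EuclideanSpace ℝ (Fin d))
    (h₁ : ‖ω₁‖ = 1) (h₂ : ‖ω₂‖ = 1) (h₃ : ‖ω₃‖ = 1) (h₄ : ‖ω₄‖ = 1)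
    (hsum : ω₁ + ω₂ + ω₃ + ω₄ = 0) :
    ‖ω₁ + ω₂‖ * ‖ω₃ + ω₄‖ + ‖ω₁ + ω₃‖ * ‖ω₂ + ω₄‖ + ‖ω₁ + ω₄‖ * ‖ω₂ + ω₃‖ = 4 :=
  norm_add_mul_norm_add_sum_eq_four h₁ h₂ h₃ h₄ hsum
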